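/- arXiv:2003.14280 — 6 statements merged into one kernel-verified Lean document; each statement's English description precedes it below -/
import Mathlib

section
/- Let W be a nonnegative random variable with E[W] = 1 and E[W²] ≤ e^{cN} for some c > 0 and N ≥ 1. Then there exists η ∈ [1/2, e^{CN}] (for some constant C depending only on c, for N sufficiently large) such that P(W ≥ η) ≥ c'/(η·(2 + log η)²) for an absolute constant c' > 0. -/
/-!
Dyadic decomposition: every real `x` satisfies
`x ≤ 1/2 + x²/2^K + ∑_{k ≤ K} 2^k·1{x ≥ 2^k/2}`. Taking expectations with `2^K ≥ 8 e^{cN}`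
leaves `∑_{k ≤ K} 2^k P(W ≥ 2^k/2) > 1/4`, while `∑_k 1/(8(k+1)²) ≤ 1/4`; so some `k` has
`P(W ≥ 2^k/2) > 1/(8·2^k(k+1)²)`, which is the claim for `η = 2^k/2` since
`2 + log η ≥ (k+1)/2`.
-/
open MeasureTheory Finset Real

lemma sum_range_inv_succ_sq_le_two (n : ℕ) : ∑ k ∈ range n, (((k : ℝ) + 1) ^ 2)⁻¹ ≤ 2 := by
  have hIoo : Ioo 0 (n + 1) = Ico (0 + 1) (n + 1) := by ext; simp; omega
  have h := sum_Ioo_inv_sq_le (α := ℝ) 0 (n + 1)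
  rw [hIoo, ← sum_Ico_add' (fun i : ℕ => ((i : ℝ) ^ 2)⁻¹), ← range_eq_Ico] at h
  simpa using h

lemma le_half_add_sum_indicator_of_lt {x : ℝ} {K : ℕ} (hx : x < 2 ^ K / 2) :
    x ≤ 1 / 2 + ∑ k ∈ range K, (Set.Ici ((2 : ℝ) ^ k / 2)).indicator (fun _ => (2 : ℝ) ^ k) x := by
  induction K with
  | zero => simp at hx ⊢; linarith
  | succ K ih =>
    rw [sum_range_succ]
    by_cases h : x < 2 ^ K / 2
    · have : 0 ≤ (Set.Ici ((2 : ℝ) ^ K / 2)).indicator (fun _ => (2 : ℝ) ^ K) x :=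
        Set.indicator_nonneg (fun _ _ => by positivity) x
      linarith [ih h]
    · have hmem : x ∈ Set.Ici ((2 : ℝ) ^ K / 2) := not_lt.mp h
      rw [Set.indicator_of_mem hmem]
      have : 0 ≤ ∑ k ∈ range K, (Set.Ici ((2 : ℝ) ^ k / 2)).indicator (fun _ => (2 : ℝ) ^ k) x :=
        sum_nonneg fun k _ => Set.indicator_nonneg (fun _ _ => by positivity) x
      rw [pow_succ] at hx
      linarith

lemma le_half_add_sq_div_add_sum_indicator (x : ℝ) (K : ℕ) :
    x ≤ 1 / 2 + x ^ 2 / 2 ^ K +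
      ∑ k ∈ range (K + 1), (Set.Ici ((2 : ℝ) ^ k / 2)).indicator (fun _ => (2 : ℝ) ^ k) x := by
  have hsum : 0 ≤ ∑ k ∈ range (K + 1),
      (Set.Ici ((2 : ℝ) ^ k / 2)).indicator (fun _ => (2 : ℝ) ^ k) x :=
    sum_nonneg fun k _ => Set.indicator_nonneg (fun _ _ => by positivity) x
  rcases lt_or_ge x (2 ^ K) with hx | hx
  · have := le_half_add_sum_indicator_of_lt (x := x) (K := K + 1)
      (by rwa [pow_succ, mul_div_cancel_right₀ _ two_ne_zero])
    have : 0 ≤ x ^ 2 / 2 ^ K := by positivity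
    linarith
  · have hK : (0 : ℝ) < 2 ^ K := by positivity
    have : x ≤ x ^ 2 / 2 ^ K := by rw [le_div_iff₀ hK]; nlinarith
    linarith

lemma integral_le_half_add_integral_sq_div_add_sum {Ω : Type*} [MeasurableSpace Ω]
    {μ : Measure Ω} [IsProbabilityMeasure μ] {W : Ω → ℝ} (hW : Measurable W)
    (hWint : Integrable W μ) (hW2int : Integrable (fun ω => W ω ^ 2) μ) (K : ℕ) :
    ∫ ω, W ω ∂μ ≤ 1 / 2 + (∫ ω, W ω ^ 2 ∂μ) / 2 ^ K +
      ∑ k ∈ range (K + 1), 2 ^ k * μ.real {ω | (2 : ℝ) ^ k / 2 ≤ W ω} := by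
  set f : ℕ → Ω → ℝ := fun k => {ω | (2 : ℝ) ^ k / 2 ≤ W ω}.indicator fun _ => (2 : ℝ) ^ k
  have hf : ∀ k, Integrable (f k) μ := fun k =>
    (integrable_const _).indicator (measurableSet_le measurable_const hW)
  have hsum : Integrable (fun ω => ∑ k ∈ range (K + 1), f k ω) μ :=
    integrable_finsetSum _ fun k _ => hf k
  have hsq : Integrable (fun ω => W ω ^ 2 / 2 ^ K) μ := hW2int.div_const _
  have hhead : Integrable (fun ω => 1 / 2 + W ω ^ 2 / 2 ^ K) μ := (integrable_const _).add hsq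
  calc ∫ ω, W ω ∂μ
      ≤ ∫ ω, (1 / 2 + W ω ^ 2 / 2 ^ K + ∑ k ∈ range (K + 1), f k ω) ∂μ :=
        integral_mono hWint (hhead.add hsum) fun ω => le_half_add_sq_div_add_sum_indicator (W ω) K
    _ = _ := by
        rw [integral_add hhead hsum, integral_add (integrable_const _) hsq, integral_const,
          integral_div, integral_finsetSum _ fun k _ => hf k]
        simp [f, integral_indicator_const _ (measurableSet_le measurable_const hW), mul_comm]

lemma exists_lt_of_quarter_lt_sum_two_pow_mul {p : ℕ → ℝ} {n : ℕ}
    (h : 1 / 4 < ∑ k ∈ range n, 2 ^ k * p k) :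
    ∃ k ∈ range n, (1 / 8) / (2 ^ k * ((k : ℝ) + 1) ^ 2) < p k := by
  have hweights : ∑ k ∈ range n, (1 / 8) * (((k : ℝ) + 1) ^ 2)⁻¹ ≤ 1 / 4 := by
    rw [← mul_sum]; linarith [sum_range_inv_succ_sq_le_two n]
  obtain ⟨k, hk, hlt⟩ := exists_lt_of_sum_lt (hweights.trans_lt h)
  refine ⟨k, hk, ?_⟩
  calc (1 / 8) / (2 ^ k * ((k : ℝ) + 1) ^ 2)
      _ = (1 / 8) * (((k : ℝ) + 1) ^ 2)⁻¹ / 2 ^ k := by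
        rw [mul_comm (2 ^ k : ℝ), ← div_div, div_eq_mul_inv (1 / 8 : ℝ) (((k : ℝ) + 1) ^ 2)]
      _ < p k := (div_lt_iff₀' (by positivity)).2 hlt

lemma exists_two_pow_mem_Icc {x : ℝ} (hx : 0 ≤ x) :
    ∃ K : ℕ, 8 * exp x ≤ 2 ^ K ∧ (2 : ℝ) ^ K ≤ exp (2 * x + 4) := by
  have hlog2 : 1 / 2 < log 2 := by linarith [log_two_gt_d9]
  have hlog2' : log 2 < 1 := by linarith [log_two_lt_d9]
  have hm := Nat.le_ceil (2 * x)
  have hm' := Nat.ceil_lt_add_one (by positivity : 0 ≤ 2 * x)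
  refine ⟨⌈2 * x⌉₊ + 3, ?_, ?_⟩ <;>
    rw [← rpow_natCast, rpow_def_of_pos two_pos] <;> push_cast
  · rw [show (8 : ℝ) = exp (3 * log 2) by rw [← log_rpow two_pos, exp_log (by positivity)]; norm_num,
      ← exp_add, exp_le_exp]
    nlinarith
  · rw [exp_le_exp]
    nlinarith

lemma div_two_pow_mul_two_add_log_sq_le (k : ℕ) :
    (1 / 64) / (2 ^ k / 2 * (2 + log (2 ^ k / 2)) ^ 2) ≤ (1 / 8) / (2 ^ k * ((k : ℝ) + 1) ^ 2) := by
  have hlog2 : 1 / 2 < log 2 := by linarith [log_two_gt_d9]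
  have hlog2' : log 2 < 1 := by linarith [log_two_lt_d9]
  have hlog : ((k : ℝ) + 1) / 2 ≤ 2 + log (2 ^ k / 2) := by
    rw [log_div (by positivity) two_ne_zero, log_pow]
    nlinarith
  have hk : (0 : ℝ) < 2 ^ k := by positivity
  have hpos : 0 < 2 + log (2 ^ k / 2) := lt_of_lt_of_le (by positivity) hlog
  rw [div_le_div_iff₀ (by positivity) (by positivity)]
  have := pow_le_pow_left₀ (by positivity) hlog 2
  nlinarith

theorem stmt3 :
    ∃ c' > (0:ℝ), ∀ c > (0:ℝ), ∃ C > (0:ℝ), ∃ N₀ : ℕ, ∀ N : ℕ, N₀ ≤ N → 1 ≤ N →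
    ∀ (Ω : Type) (_ : MeasurableSpace Ω) (μ : Measure Ω) (_ : IsProbabilityMeasure μ)
      (W : Ω → ℝ), Measurable W → (∀ ω, 0 ≤ W ω) →
      Integrable W μ → (∫ ω, W ω ∂μ = 1) →
      Integrable (fun ω => (W ω)^2) μ → (∫ ω, (W ω)^2 ∂μ ≤ Real.exp (c * N)) →
      ∃ η : ℝ, η ∈ Set.Icc (1/2 : ℝ) (Real.exp (C * N)) ∧
        c' / (η * (2 + Real.log η)^2) ≤ (μ {x | η ≤ W x}).toReal := by
  refine ⟨1 / 64, by norm_num, fun c hc => ⟨2 * c + 4, by positivity, 0,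
    fun N _ hN Ω _ μ _ W hW _ hWint hWmean hW2int hW2 => ?_⟩⟩
  have hN : (1 : ℝ) ≤ N := by exact_mod_cast hN
  obtain ⟨K, hK_ge, hK_le⟩ := exists_two_pow_mem_Icc (by positivity : 0 ≤ c * N)
  have htail : (∫ ω, W ω ^ 2 ∂μ) / 2 ^ K ≤ 1 / 8 := by
    rw [div_le_iff₀ (by positivity)]
    linarith
  have hsum : 1 / 4 < ∑ k ∈ range (K + 1), 2 ^ k * μ.real {ω | (2 : ℝ) ^ k / 2 ≤ W ω} := by
    linarith [integral_le_half_add_integral_sq_div_add_sum hW hWint hW2int K]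
  obtain ⟨k, hk, hpk⟩ := exists_lt_of_quarter_lt_sum_two_pow_mul hsum
  have hkK : (2 : ℝ) ^ k ≤ 2 ^ K :=
    pow_le_pow_right₀ one_le_two (Nat.lt_succ_iff.mp (mem_range.mp hk))
  refine ⟨2 ^ k / 2, ⟨?_, ?_⟩, (div_two_pow_mul_two_add_log_sq_le k).trans hpk.le⟩
  · linarith [one_le_pow₀ (M₀ := ℝ) one_le_two (n := k)]
  · calc (2 : ℝ) ^ k / 2 ≤ 2 ^ K := by linarith [pow_pos (two_pos : (0 : ℝ) < 2) k]
      _ ≤ exp (2 * (c * N) + 4) := hK_le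
      _ ≤ exp ((2 * c + 4) * N) := exp_le_exp.mpr (by nlinarith)
end

section
/- Let W₁, W₂, ... be nonnegative random variables with E[W_N] = 1 for all N, and let 𝕡̃_N be the size-biased measure defined by d𝕡̃_N/dP = W_N. If for every L > 0 we have 𝕡̃_N(W_N ≥ L) → 1 as N → ∞, then W_N → 0 in probability under P. -/
/-!
Split `{ε ≤ W_N}` at a large level `L`. Markov's inequality gives `P(W_N ≥ L) ≤ 1 / L`, while
`ε · P(ε ≤ W_N < L) ≤ E[W_N; W_N < L] = 1 - 𝕡̃_N(W_N ≥ L) → 0`. Hence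
`limsup P(W_N ≥ ε) ≤ 1 / L` for every `L`.
-/

open MeasureTheory Filter Topology

section

variable {α : Type*} [MeasurableSpace α] {μ : Measure α} {f : α → ℝ}

lemma mul_measureReal_Ico_le_setIntegral_lt (hf : Measurable f) (hf0 : 0 ≤ᵐ[μ] f)
    (hfi : Integrable f μ) {ε L : ℝ} (hε : 0 < ε) :
    ε * μ.real {x | ε ≤ f x ∧ f x < L} ≤ ∫ x in {x | f x < L}, f x ∂μ := by
  have hS : MeasurableSet {x | f x < L} := hf measurableSet_Iio
  have hset : {x | ε ≤ f x ∧ f x < L} = {x | ε ≤ Set.indicator {x | f x < L} f x} := by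
    ext x
    by_cases hx : f x < L <;> simp [hx, hε.not_ge]
  rw [hset, ← integral_indicator hS]
  exact mul_meas_ge_le_integral_of_nonneg
    (hf0.mono fun x hx => Set.indicator_nonneg (fun _ _ => hx) x) (hfi.indicator hS) ε

lemma measureReal_ge_le_div_add_div [IsFiniteMeasure μ] (hf : Measurable f)
    (hf0 : 0 ≤ᵐ[μ] f) (hfi : Integrable f μ) {ε L : ℝ} (hε : 0 < ε) (hL : 0 < L) :
    μ.real {x | ε ≤ f x} ≤
      (∫ x, f x ∂μ) / L + (∫ x, f x ∂μ - ∫ x, Set.indicator {x | L ≤ f x} f x ∂μ) / ε := by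
  have hS : MeasurableSet {x | L ≤ f x} := hf measurableSet_Ici
  have hsplit : {x | ε ≤ f x} ⊆ {x | L ≤ f x} ∪ {x | ε ≤ f x ∧ f x < L} := by
    intro x hx
    by_cases hxL : L ≤ f x
    · exact Or.inl hxL
    · exact Or.inr ⟨hx, not_le.mp hxL⟩
  have htop : μ.real {x | L ≤ f x} ≤ (∫ x, f x ∂μ) / L := by
    rw [le_div_iff₀ hL, mul_comm]
    exact mul_meas_ge_le_integral_of_nonneg hf0 hfi L
  have hbelow : μ.real {x | ε ≤ f x ∧ f x < L} ≤
      (∫ x, f x ∂μ - ∫ x, Set.indicator {x | L ≤ f x} f x ∂μ) / ε := by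
    rw [le_div_iff₀ hε, mul_comm, integral_indicator hS, ← setIntegral_compl hS hfi]
    simpa only [Set.compl_ofPred, not_le] using
      mul_measureReal_Ico_le_setIntegral_lt hf hf0 hfi (L := L) hε
  calc μ.real {x | ε ≤ f x}
      ≤ μ.real ({x | L ≤ f x} ∪ {x | ε ≤ f x ∧ f x < L}) := measureReal_mono hsplit
    _ ≤ μ.real {x | L ≤ f x} + μ.real {x | ε ≤ f x ∧ f x < L} := measureReal_union_le _ _
    _ ≤ _ := add_le_add htop hbelow

end

theorem stmt4 {Ω : Type*} [MeasurableSpace Ω] (μ : Measure Ω) [IsProbabilityMeasure μ]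
    (W : ℕ → Ω → ℝ) (hmeas : ∀ N, Measurable (W N)) (hpos : ∀ N ω, 0 ≤ W N ω)
    (hint : ∀ N, Integrable (W N) μ) (hmean : ∀ N, ∫ ω, W N ω ∂μ = 1)
    (h : ∀ L > (0:ℝ),
      Tendsto (fun N => ∫ ω, Set.indicator {x | L ≤ W N x} (W N) ω ∂μ) atTop (nhds 1)) :
    TendstoInMeasure μ W atTop (fun _ => (0:ℝ)) := by
  rw [tendstoInMeasure_iff_measureReal_dist]
  intro ε hε
  simp only [Real.dist_eq, sub_zero, abs_of_nonneg (hpos _ _)]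
  refine tendsto_order.2 ⟨fun a ha => Eventually.of_forall fun N => ha.trans_le
    measureReal_nonneg, fun δ hδ => ?_⟩
  have hL : 0 < 2 / δ := by positivity
  have hbound : Tendsto (fun N => 1 / (2 / δ) +
      (1 - ∫ ω, Set.indicator {x | 2 / δ ≤ W N x} (W N) ω ∂μ) / ε) atTop (𝓝 (δ / 2)) := by
    simpa using ((h _ hL).const_sub 1).div_const ε |>.const_add (1 / (2 / δ))
  filter_upwards [hbound.eventually_lt_const (half_lt_self hδ)] with N hN
  have hsplit := measureReal_ge_le_div_add_div (hmeas N) (Eventually.of_forall (hpos N))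
    (hint N) hε hL
  rw [hmean N] at hsplit
  exact hsplit.trans_lt hN
end

section
/- Let X₁, ..., X_n be i.i.d. integer-valued random variables each with a symmetric unimodal distribution (i.e., P(X=k) is symmetric around 0 and nonincreasing in |k|). Then S_n = X₁ + ... + X_n also has a symmetric unimodal distribution. -/
/-!
The law of a sum of independent integer variables is the discrete convolution of their laws,
so by induction on the number of summands it suffices that the convolution `f ⋆ g` of two
symmetric unimodal functions is again symmetric unimodal. Symmetry is a change of variables.
For unimodality, Abel summation gives `(f ⋆ g) k - (f ⋆ g) (k + 1) = ∑ⱼ (f j - f (j + 1)) g (k - j)`,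
and pairing the terms `j = n` and `j = -(n + 1)` (for `n ≥ 0`) turns this into
`∑ₙ (f n - f (n + 1)) (g (k - n) - g (k + n + 1))`, a sum of products of two nonnegative factors
when `k ≥ 0`, since `|k - n| ≤ k + n + 1`.
-/

open MeasureTheory ProbabilityTheory

structure IsSymmUnimodal (g : ℤ → ℝ) : Prop where
  neg_eq : ∀ m, g (-m) = g m
  succ_le : ∀ m : ℤ, 0 ≤ m → g (m + 1) ≤ g m

namespace IsSymmUnimodal

variable {g : ℤ → ℝ}

lemma antitoneOn (hg : IsSymmUnimodal g) : AntitoneOn g (Set.Ici 0) := fun a ha b _ hab =>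
  Int.leInduction (motive := fun b _ => g b ≤ g a) le_rfl
    (fun n hn ih => (hg.succ_le n (le_trans ha hn)).trans ih) b hab

lemma apply_abs (hg : IsSymmUnimodal g) (a : ℤ) : g |a| = g a := by
  rcases abs_choice a with h | h <;> rw [h]
  exact hg.neg_eq a

lemma le_of_abs_le (hg : IsSymmUnimodal g) {a b : ℤ} (h : |a| ≤ |b|) : g b ≤ g a := by
  rw [← hg.apply_abs a, ← hg.apply_abs b]
  exact hg.antitoneOn (abs_nonneg a) (abs_nonneg b) h

end IsSymmUnimodal

lemma Summable.mul_of_abs_le {ι : Type*} {f g : ι → ℝ} {C : ℝ} (hf : Summable f)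
    (hg : ∀ i, |g i| ≤ C) : Summable fun i => f i * g i :=
  Summable.of_norm_bounded (hf.abs.mul_right C) fun i => by
    rw [Real.norm_eq_abs, abs_mul]
    exact mul_le_mul_of_nonneg_left (hg i) (abs_nonneg _)

noncomputable def discreteConv (f g : ℤ → ℝ) (c : ℤ) : ℝ := ∑' m, f m * g (c - m)

section discreteConv

variable {f g : ℤ → ℝ}

lemma discreteConv_neg (hf : ∀ m, f (-m) = f m) (hg : ∀ m, g (-m) = g m) (k : ℤ) :
    discreteConv f g (-k) = discreteConv f g k := by
  rw [discreteConv, ← (Equiv.neg ℤ).tsum_eq]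
  refine tsum_congr fun m => ?_
  rw [Equiv.neg_apply, hf, show -k - -m = -(k - m) by ring, hg]

lemma discreteConv_sub_discreteConv_add_one {C : ℝ} (hf : Summable f) (hg : ∀ m, |g m| ≤ C)
    (k : ℤ) : discreteConv f g k - discreteConv f g (k + 1)
      = ∑' j, (f j - f (j + 1)) * g (k - j) := by
  have hf_shift : Summable fun j => f (j + 1) := hf.comp_injective (add_left_injective 1)
  have h_shift : discreteConv f g (k + 1) = ∑' j, f (j + 1) * g (k - j) := by
    rw [discreteConv, ← (Equiv.addRight (1 : ℤ)).tsum_eq]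
    exact tsum_congr fun j => by simp only [Equiv.coe_addRight, add_sub_add_right_eq_sub]
  rw [h_shift, discreteConv, ← (hf.mul_of_abs_le fun j => hg (k - j)).tsum_sub
    (hf_shift.mul_of_abs_le fun j => hg (k - j))]
  simp_rw [sub_mul]

lemma IsSymmUnimodal.discreteConv {C : ℝ} (hf : IsSymmUnimodal f) (hg : IsSymmUnimodal g)
    (hfs : Summable f) (hgC : ∀ m, |g m| ≤ C) : IsSymmUnimodal (discreteConv f g) where
  neg_eq := discreteConv_neg hf.neg_eq hg.neg_eq
  succ_le k hk := by
    have hsum : Summable fun j => (f j - f (j + 1)) * g (k - j) :=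
      (hfs.sub (hfs.comp_injective (add_left_injective 1))).mul_of_abs_le fun j => hgC (k - j)
    rw [← sub_nonneg, discreteConv_sub_discreteConv_add_one hfs hgC,
      ← tsum_nat_add_neg_add_one hsum]
    refine tsum_nonneg fun n => ?_
    have h_pair : (f n - f (n + 1)) * g (k - n)
          + (f (-(n + 1)) - f (-(n + 1) + 1)) * g (k - -(n + 1))
        = (f n - f (n + 1)) * (g (k - n) - g (k + n + 1)) := by
      rw [hf.neg_eq, show -((n : ℤ) + 1) + 1 = -n by ring, hf.neg_eq,
        show k - -((n : ℤ) + 1) = k + n + 1 by ring]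
      ring
    have h_abs : |k - n| ≤ |k + n + 1| := by
      rw [abs_of_nonneg (by omega : 0 ≤ k + n + 1)]
      exact abs_le.2 ⟨by omega, by omega⟩
    rw [h_pair]
    exact mul_nonneg (sub_nonneg.2 (hf.succ_le n n.cast_nonneg))
      (sub_nonneg.2 (hg.le_of_abs_le h_abs))

end discreteConv

section Probability

variable {Ω : Type*} [MeasurableSpace Ω] {μ : Measure Ω}

lemma summable_measureReal_fiber [IsFiniteMeasure μ] {Y : Ω → ℤ} (hY : Measurable Y) :
    Summable fun m => μ.real {ω | Y ω = m} := by
  refine ENNReal.summable_toReal (?_ : ∑' m, μ (Y ⁻¹' {m}) ≠ ⊤)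
  rw [← measure_iUnion (pairwise_disjoint_fiber Y) fun m => hY (measurableSet_singleton m)]
  exact measure_ne_top μ _

lemma measure_add_eq_tsum {Y T : Ω → ℤ} (hY : Measurable Y) (hT : Measurable T)
    (hYT : IndepFun Y T μ) (k : ℤ) :
    μ {ω | Y ω + T ω = k} = ∑' m, μ {ω | Y ω = m} * μ {ω | T ω = k - m} := by
  have h_union : {ω | Y ω + T ω = k} = ⋃ m, {ω | Y ω = m} ∩ {ω | T ω = k - m} := by
    ext ω
    simp only [Set.mem_ofPred_eq, Set.mem_iUnion, Set.mem_inter_iff]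
    exact ⟨fun h => ⟨Y ω, rfl, by omega⟩, fun ⟨m, h₁, h₂⟩ => by omega⟩
  have h_disj : Pairwise (Function.onFun Disjoint
      fun m => {ω | Y ω = m} ∩ {ω | T ω = k - m}) := fun a b hab =>
    (pairwise_disjoint_fiber Y hab).mono Set.inter_subset_left Set.inter_subset_left
  rw [h_union, measure_iUnion h_disj fun m =>
    (hY (measurableSet_singleton m)).inter (hT (measurableSet_singleton (k - m)))]
  exact tsum_congr fun m => hYT.measure_inter_preimage_eq_mul {m} {k - m}
    (measurableSet_singleton _) (measurableSet_singleton _)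

lemma measureReal_add_eq_discreteConv [IsFiniteMeasure μ] {Y T : Ω → ℤ} (hY : Measurable Y)
    (hT : Measurable T) (hYT : IndepFun Y T μ) (k : ℤ) :
    μ.real {ω | Y ω + T ω = k}
      = discreteConv (fun m => μ.real {ω | Y ω = m}) (fun m => μ.real {ω | T ω = m}) k := by
  rw [measureReal_def, measure_add_eq_tsum hY hT hYT,
    ENNReal.tsum_toReal_eq fun m => ENNReal.mul_ne_top (measure_ne_top μ _) (measure_ne_top μ _)]
  simp only [ENNReal.toReal_mul, discreteConv, measureReal_def]

lemma isSymmUnimodal_measureReal_sum [IsFiniteMeasure μ] {ι : Type*} {X : ι → Ω → ℤ}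
    (hX : ∀ i, Measurable (X i)) (hindep : iIndepFun X μ)
    (hlaw : ∀ i, IsSymmUnimodal fun k => μ.real {ω | X i ω = k}) (s : Finset ι) :
    IsSymmUnimodal fun k => μ.real {ω | ∑ i ∈ s, X i ω = k} := by
  classical
  induction s using Finset.induction_on with
  | empty =>
    simp only [Finset.sum_empty]
    refine ⟨fun m => by simp only [@eq_comm ℤ 0, neg_eq_zero], fun m hm => ?_⟩
    have h_empty : {ω : Ω | (0 : ℤ) = m + 1} = ∅ := by
      ext ω
      simp only [Set.mem_ofPred_eq, Set.mem_empty_iff_false, iff_false]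
      omega
    rw [h_empty, measureReal_empty]
    exact measureReal_nonneg
  | insert i s hi ih =>
    have hs : Measurable fun ω => ∑ j ∈ s, X j ω := Finset.measurable_sum s fun j _ => hX j
    have hi_indep : IndepFun (X i) (fun ω => ∑ j ∈ s, X j ω) μ := by
      simpa only [Finset.sum_fn] using (hindep.indepFun_finsetSum_of_notMem hX hi).symm
    simp_rw [Finset.sum_insert hi, measureReal_add_eq_discreteConv (hX i) hs hi_indep]
    exact (hlaw i).discreteConv ih (summable_measureReal_fiber (hX i)) fun k =>
      (abs_of_nonneg measureReal_nonneg).trans_le (measureReal_mono (Set.subset_univ _))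

end Probability

theorem stmt5 {Ω : Type*} [MeasurableSpace Ω] (μ : Measure Ω) [IsProbabilityMeasure μ]
    (n : ℕ) (X : Fin n → Ω → ℤ) (hmeas : ∀ i, Measurable (X i))
    (hindep : iIndepFun X μ)
    (p : ℤ → ℝ) (hlaw : ∀ i k, (μ {ω | X i ω = k}).toReal = p k)
    (hsymm : ∀ k : ℤ, p k = p (-k))
    (hunim : ∀ k : ℤ, 0 ≤ k → p (k + 1) ≤ p k) :
    (∀ k : ℤ, μ {ω | ∑ i, X i ω = k} = μ {ω | ∑ i, X i ω = -k}) ∧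
    (∀ k : ℤ, 0 ≤ k → μ {ω | ∑ i, X i ω = k + 1} ≤ μ {ω | ∑ i, X i ω = k}) := by
  have hp : IsSymmUnimodal p := ⟨fun k => (hsymm k).symm, hunim⟩
  have hS := isSymmUnimodal_measureReal_sum hmeas hindep
    (fun i => (funext (hlaw i) : (fun k => μ.real {ω | X i ω = k}) = p) ▸ hp) Finset.univ
  refine ⟨fun k => ?_, fun k hk => ?_⟩
  · exact ((measureReal_eq_measureReal_iff).mp (hS.neg_eq k)).symm
  · exact (ENNReal.toReal_le_toReal (measure_ne_top μ _) (measure_ne_top μ _)).mp (hS.succ_le k hk)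
end

section
/- Let X₁, X₂, ... be i.i.d. integer-valued random variables satisfying P(|X₁| > x) ≥ C(log log x)^α / log x for all large x, for some α > 1 and C > 0. Then for every K > 1, almost surely, max(|X₁|,...,|X_n|) > K^n for all sufficiently large n. -/
/-!
Let `p n = P(|X₁| > Kⁿ)`. By independence, the probability that all of `|X₁|, …, |Xₙ|` stay
below `Kⁿ` is `(1 - p n)ⁿ ≤ exp (-n p n)`. The tail bound at `x = Kⁿ` gives
`n p n ≥ (C / log K) (log n + log log K)^α`, which beats `2 log n` because `α > 1`.
Hence these probabilities are eventually at most `n⁻²`, and Borel–Cantelli concludes.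
-/

open MeasureTheory ProbabilityTheory Filter Real

lemma eventually_mul_le_mul_add_rpow (a c : ℝ) {b α : ℝ} (hb : 0 < b) (hα : 1 < α) :
    ∀ᶠ t : ℝ in atTop, a * t ≤ b * (t + c) ^ α := by
  have hpow : Tendsto (fun t : ℝ => t ^ (α - 1)) atTop atTop := tendsto_rpow_atTop (by linarith)
  filter_upwards [eventually_ge_atTop (2 * |c|), hpow.eventually_ge_atTop (max a 0 * 2 ^ α / b)]
    with t hc ht
  have ht0 : 0 ≤ t := le_trans (by positivity) hc
  have hhalf : t / 2 ≤ t + c := by linarith [neg_abs_le c]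
  calc a * t ≤ max a 0 * t := by gcongr; exact le_max_left a 0
    _ = max a 0 * 2 ^ α / b * t * (b / 2 ^ α) := by field_simp
    _ ≤ t ^ (α - 1) * t * (b / 2 ^ α) := by gcongr
    _ = b * (t / 2) ^ α := by
        rw [div_rpow ht0 zero_le_two, ← rpow_add_one' ht0 (by linarith), sub_add_cancel]
        ring
    _ ≤ b * (t + c) ^ α := by gcongr

lemma eventually_two_mul_log_le_tail_bound {C α K : ℝ} (hC : 0 < C) (hα : 1 < α) (hK : 1 < K) :
    ∀ᶠ n : ℕ in atTop, 2 * log n ≤ n * (C * log (log (K ^ n)) ^ α / log (K ^ n)) := by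
  have hlogK : 0 < log K := log_pos hK
  have hlog : Tendsto (fun n : ℕ => log n) atTop atTop :=
    tendsto_log_atTop.comp tendsto_natCast_atTop_atTop
  filter_upwards [hlog.eventually (eventually_mul_le_mul_add_rpow 2 (log (log K))
    (div_pos hC hlogK) hα), eventually_gt_atTop 0] with n hn hn0
  have hn0' : (0 : ℝ) < n := by exact_mod_cast hn0
  rw [log_pow, log_mul hn0'.ne' hlogK.ne']
  calc 2 * log n ≤ C / log K * (log n + log (log K)) ^ α := hn
    _ = n * (C * (log n + log (log K)) ^ α / (n * log K)) := by field_simp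

section IID

variable {Ω β : Type*} [MeasurableSpace Ω] [MeasurableSpace β] {μ : Measure Ω}
  {X : ℕ → Ω → β} {S : Set β}

lemma measure_forall_lt_mem_eq_pow (hindep : iIndepFun X μ)
    (hid : ∀ i, IdentDistrib (X i) (X 0) μ μ) (hS : MeasurableSet S) (n : ℕ) :
    μ {ω | ∀ i < n, X i ω ∈ S} = μ (X 0 ⁻¹' S) ^ n := by
  have hset : {ω | ∀ i < n, X i ω ∈ S} = ⋂ i ∈ Finset.range n, X i ⁻¹' S := by
    ext ω; simp
  rw [hset, hindep.meas_biInter fun i _ => ⟨S, hS, rfl⟩,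
    Finset.prod_congr rfl fun i _ => (hid i).measure_mem_eq hS]
  simp

lemma measureReal_forall_lt_mem_le_exp [IsProbabilityMeasure μ] (hindep : iIndepFun X μ)
    (hid : ∀ i, IdentDistrib (X i) (X 0) μ μ) (hX0 : Measurable (X 0)) (hS : MeasurableSet S)
    (n : ℕ) :
    μ.real {ω | ∀ i < n, X i ω ∈ S} ≤ exp (-(n * μ.real {ω | X 0 ω ∉ S})) := by
  have hcompl : μ.real {ω | X 0 ω ∉ S} = 1 - μ.real (X 0 ⁻¹' S) := by
    rw [← probReal_univ (μ := μ)]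
    exact measureReal_compl (hX0 hS)
  calc μ.real {ω | ∀ i < n, X i ω ∈ S} = (1 - μ.real {ω | X 0 ω ∉ S}) ^ n := by
        rw [measureReal_def, measure_forall_lt_mem_eq_pow hindep hid hS, ENNReal.toReal_pow,
          hcompl, sub_sub_cancel, measureReal_def]
    _ ≤ exp (-μ.real {ω | X 0 ω ∉ S}) ^ n := by
        gcongr
        · rw [hcompl, sub_sub_cancel]; exact measureReal_nonneg
        · exact one_sub_le_exp_neg _
    _ = exp (-(n * μ.real {ω | X 0 ω ∉ S})) := by rw [← exp_nat_mul]; ring_nf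

end IID

lemma ae_eventually_notMem_of_summable_measureReal {Ω : Type*} [MeasurableSpace Ω]
    {μ : Measure Ω} [IsFiniteMeasure μ] {s : ℕ → Set Ω}
    (hs : Summable fun n => μ.real (s n)) : ∀ᵐ ω ∂μ, ∀ᶠ n in atTop, ω ∉ s n := by
  apply ae_eventually_notMem
  have hofReal : ∑' n, μ (s n) = ENNReal.ofReal (∑' n, μ.real (s n)) := by
    rw [ENNReal.ofReal_tsum_of_nonneg (fun n => measureReal_nonneg) hs]
    simp [measureReal_def]
  rw [hofReal]
  exact ENNReal.ofReal_ne_top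

theorem stmt8 {Ω : Type*} [MeasurableSpace Ω] (μ : Measure Ω) [IsProbabilityMeasure μ]
    (X : ℕ → Ω → ℤ) (hmeas : ∀ i, Measurable (X i))
    (hindep : iIndepFun X μ)
    (hid : ∀ i, IdentDistrib (X i) (X 0) μ μ)
    (α C : ℝ) (hα : 1 < α) (hC : 0 < C)
    (htail : ∃ x₀ : ℝ, ∀ x ≥ x₀,
      C * (Real.log (Real.log x))^α / Real.log x ≤ (μ {ω | x < |(X 0 ω : ℝ)|}).toReal) :
    ∀ K : ℝ, 1 < K →
      ∀ᵐ ω ∂μ, ∀ᶠ n in atTop, ∃ i < n, K^n < |(X i ω : ℝ)| := by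
  intro K hK
  obtain ⟨x₀, hx₀⟩ := htail
  have hbad : ∀ᶠ n : ℕ in atTop,
      μ.real {ω | ∀ i < n, |(X i ω : ℝ)| ≤ K ^ n} ≤ 1 / (n : ℝ) ^ 2 := by
    filter_upwards [eventually_two_mul_log_le_tail_bound hC hα hK,
      (tendsto_pow_atTop_atTop_of_one_lt hK).eventually_ge_atTop x₀, eventually_gt_atTop 0]
      with n hlog hx hn
    have hn' : (0 : ℝ) < n := by exact_mod_cast hn
    calc μ.real {ω | ∀ i < n, |(X i ω : ℝ)| ≤ K ^ n}
        ≤ exp (-(n * μ.real {ω | K ^ n < |(X 0 ω : ℝ)|})) := by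
          simpa only [Set.mem_ofPred_eq, not_le] using measureReal_forall_lt_mem_le_exp hindep hid
            (hmeas 0) (.of_discrete (s := {k : ℤ | |(k : ℝ)| ≤ K ^ n})) n
      _ ≤ exp (-log (n ^ 2)) := by
          rw [log_pow, Nat.cast_ofNat]
          exact exp_le_exp.mpr (neg_le_neg (hlog.trans (by gcongr; exact hx₀ _ hx)))
      _ = 1 / (n : ℝ) ^ 2 := by rw [exp_neg, exp_log (by positivity), one_div]
  have hsum : Summable fun n => μ.real {ω | ∀ i < n, |(X i ω : ℝ)| ≤ K ^ n} :=
    (summable_one_div_nat_pow.mpr one_lt_two).of_norm_bounded_eventually_nat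
      (hbad.mono fun n hn => by rwa [Real.norm_of_nonneg measureReal_nonneg])
  filter_upwards [ae_eventually_notMem_of_summable_measureReal hsum] with ω hω
  filter_upwards [hω] with n hn
  simpa using hn
end

section
/- Let ω be a real random variable with E[e^{βω}] < ∞ for all β > 0 and s = ess sup ω < ∞. With λ(β) = log E[e^{βω}], one has βs - λ(β) → -log P(ω = s) as β → ∞ (with the convention -log 0 = +∞). -/
/-!
Factor out the expected maximum: `E[e^{βω}] = e^{βs} E[e^{β(ω - s)}]`, so
`βs - λ(β) = -log E[e^{β(ω - s)}]`. Since `ω ≤ s` a.s., the integrand is bounded by `1` and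
converges pointwise to the indicator of `{ω = s}`, so by dominated convergence
`E[e^{β(ω - s)}] → P(ω = s)`. Continuity of `log` at a positive limit, and `log → -∞` at `0⁺`,
give the two cases.
-/

open MeasureTheory Filter Topology

section ExpMoment

variable {Ω : Type*} [MeasurableSpace Ω] {μ : Measure Ω} {X : Ω → ℝ} {s : ℝ}

theorem integral_exp_mul_eq_exp_mul_integral_exp_mul_sub (β : ℝ) :
    ∫ x, Real.exp (β * X x) ∂μ = Real.exp (β * s) * ∫ x, Real.exp (β * (X x - s)) ∂μ := by
  rw [← integral_const_mul]
  congr 1 with x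
  rw [← Real.exp_add]
  ring_nf

theorem norm_exp_mul_sub_le_one_of_le {x β : ℝ} (hβ : 0 ≤ β) (hx : x ≤ s) :
    ‖Real.exp (β * (x - s))‖ ≤ 1 := by
  rw [Real.norm_of_nonneg (Real.exp_pos _).le, Real.exp_le_one_iff]
  exact mul_nonpos_of_nonneg_of_nonpos hβ (sub_nonpos.mpr hx)

theorem integrable_exp_mul_sub_of_ae_le [IsFiniteMeasure μ] (hX : Measurable X)
    (hle : ∀ᵐ x ∂μ, X x ≤ s) {β : ℝ} (hβ : 0 ≤ β) :
    Integrable (fun x => Real.exp (β * (X x - s))) μ :=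
  .of_bound (by fun_prop) 1 (hle.mono fun _ hx => norm_exp_mul_sub_le_one_of_le hβ hx)

theorem tendsto_integral_exp_mul_sub_of_ae_le [IsFiniteMeasure μ] (hX : Measurable X)
    (hle : ∀ᵐ x ∂μ, X x ≤ s) :
    Tendsto (fun β => ∫ x, Real.exp (β * (X x - s)) ∂μ) atTop
      (𝓝 (μ.real {x | X x = s})) := by
  have hS : MeasurableSet {x | X x = s} := hX (measurableSet_singleton s)
  rw [← integral_indicator_one hS]
  refine tendsto_integral_filter_of_dominated_convergence (fun _ => 1)
    (.of_forall fun _ => by fun_prop) ?_ (integrable_const 1) ?_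
  · filter_upwards [eventually_ge_atTop 0] with β hβ
    exact hle.mono fun _ hx => norm_exp_mul_sub_le_one_of_le hβ hx
  · filter_upwards [hle] with x hx
    rcases hx.eq_or_lt with heq | hlt
    · simp [heq]
    · have hxS : x ∉ {x | X x = s} := hlt.ne
      rw [Set.indicator_of_notMem hxS]
      exact Real.tendsto_exp_atBot.comp
        (tendsto_id.atTop_mul_const_of_neg (sub_neg.mpr hlt))

theorem mul_sub_log_integral_exp_eq_neg_log [IsFiniteMeasure μ] [NeZero μ] (hX : Measurable X)
    (hle : ∀ᵐ x ∂μ, X x ≤ s) {β : ℝ} (hβ : 0 ≤ β) :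
    β * s - Real.log (∫ x, Real.exp (β * X x) ∂μ)
      = -Real.log (∫ x, Real.exp (β * (X x - s)) ∂μ) := by
  have hpos := integral_exp_pos (integrable_exp_mul_sub_of_ae_le hX hle hβ)
  rw [integral_exp_mul_eq_exp_mul_integral_exp_mul_sub (s := s),
    Real.log_mul (Real.exp_ne_zero _) hpos.ne', Real.log_exp]
  ring

end ExpMoment

theorem stmt13_general {Ω : Type*} [MeasurableSpace Ω] (μ : Measure Ω) [IsProbabilityMeasure μ]
    (X : Ω → ℝ) (hmeas : Measurable X)
    (s : ℝ) (hle : ∀ᵐ x ∂μ, X x ≤ s) :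
    (μ {x | X x = s} = 0 →
      Tendsto (fun β : ℝ => β * s - Real.log (∫ y, Real.exp (β * X y) ∂μ)) atTop atTop) ∧
    (0 < μ {x | X x = s} →
      Tendsto (fun β : ℝ => β * s - Real.log (∫ y, Real.exp (β * X y) ∂μ)) atTop
        (nhds (-Real.log (μ {x | X x = s}).toReal))) := by
  set J := fun β : ℝ => ∫ x, Real.exp (β * (X x - s)) ∂μ
  have hJ : Tendsto J atTop (𝓝 (μ {x | X x = s}).toReal) :=
    tendsto_integral_exp_mul_sub_of_ae_le hmeas hle
  have hJpos : ∀ᶠ β in atTop, 0 < J β := eventually_ge_atTop 0 |>.mono fun _ hβ =>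
    integral_exp_pos (integrable_exp_mul_sub_of_ae_le hmeas hle hβ)
  have hEq : (fun β => -Real.log (J β)) =ᶠ[atTop]
      fun β => β * s - Real.log (∫ y, Real.exp (β * X y) ∂μ) :=
    eventually_ge_atTop 0 |>.mono fun _ hβ =>
      (mul_sub_log_integral_exp_eq_neg_log hmeas hle hβ).symm
  refine ⟨fun h0 => ?_, fun hpos => ?_⟩
  · rw [h0, ENNReal.toReal_zero] at hJ
    have hJ0 : Tendsto J atTop (𝓝[>] 0) := tendsto_nhdsWithin_iff.mpr ⟨hJ, hJpos⟩
    exact (tendsto_neg_atBot_atTop.comp (Real.tendsto_log_nhdsGT_zero.comp hJ0)).congr' hEq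
  · have hm : (μ {x | X x = s}).toReal ≠ 0 :=
      (ENNReal.toReal_pos hpos.ne' (measure_ne_top μ _)).ne'
    exact ((Real.continuousAt_log hm).tendsto.comp hJ).neg.congr' hEq

theorem stmt13 {Ω : Type*} [MeasurableSpace Ω] (μ : Measure Ω) [IsProbabilityMeasure μ]
    (X : Ω → ℝ) (hmeas : Measurable X)
    (hint : ∀ β > (0:ℝ), Integrable (fun x => Real.exp (β * X x)) μ)
    (s : ℝ) (hle : ∀ᵐ x ∂μ, X x ≤ s) (hs : ∀ s' < s, 0 < μ {x | s' < X x}) :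
    (μ {x | X x = s} = 0 →
      Tendsto (fun β : ℝ => β * s - Real.log (∫ y, Real.exp (β * X y) ∂μ)) atTop atTop) ∧
    (0 < μ {x | X x = s} →
      Tendsto (fun β : ℝ => β * s - Real.log (∫ y, Real.exp (β * X y) ∂μ)) atTop
        (nhds (-Real.log (μ {x | X x = s}).toReal))) :=
  stmt13_general μ X hmeas s hle
end

section
/- Let ω be a real random variable with E[e^{βω}] < ∞ for all β > 0 and s = ess sup ω < ∞. With λ(β) = log E[e^{βω}], one has βλ'(β) - λ(β) → -log P(ω = s) as β → ∞. -/
/-!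
Subtracting `s` from `X` adds the linear function `-β s` to `λ` and leaves `β λ'(β) - λ(β)`
unchanged, so we may assume `ess sup X = 0`. Then `E[e^{βX}] → P(X = 0)` and
`β E[X e^{βX}] → 0` by dominated convergence, which gives the limit when `P(X = 0) > 0`.

If `P(X = 0) = 0`, then `λ → -∞`. The function `λ` is convex, and the Chernoff bound
`P(X ≥ -ε) ≤ e^{βε} E[e^{βX}]` gives `λ(β) ≥ -2εβ` for large `β`, so `λ' → 0`.
Since the tangent line at `β` lies below `λ`, we have `β λ'(β) - λ(β) ≥ γ λ'(β) - λ(γ)`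
for every `γ < β`. As `β → ∞` the right-hand side tends to `-λ(γ)`, which is arbitrarily
large.
-/

open MeasureTheory Filter Set Real Topology ProbabilityTheory

namespace ConvexOn

variable {f : ℝ → ℝ}

lemma deriv_nonpos_of_tendsto_atBot (hf : ConvexOn ℝ (Ioi 0) f) {β : ℝ} (hβ : 0 < β)
    (hfd : DifferentiableAt ℝ f β) (hbot : Tendsto f atTop atBot) : deriv f β ≤ 0 := by
  obtain ⟨y, hy, hβy⟩ :=
    ((hbot.eventually_lt_atBot (f β)).and (eventually_gt_atTop β)).exists
  have hslope := hf.deriv_le_slope hβ (hβ.trans hβy) hβy hfd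
  rw [slope_def_field] at hslope
  exact hslope.trans (div_neg_of_neg_of_pos (by linarith) (by linarith)).le

lemma tendsto_deriv_atTop_zero (hf : ConvexOn ℝ (Ioi 0) f)
    (hfd : ∀ β > 0, DifferentiableAt ℝ f β) (hbot : Tendsto f atTop atBot)
    (hlin : ∀ ε > 0, ∀ᶠ β in atTop, -(ε * β) ≤ f β) :
    Tendsto (deriv f) atTop (𝓝 0) := by
  refine tendsto_order.2 ⟨fun a ha => ?_, fun a ha => ?_⟩
  · filter_upwards [hlin (-a / 2) (by linarith), eventually_gt_atTop 1,
      eventually_gt_atTop (2 - 2 * f 1 / a)] with β hlinβ h1β hβ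
    have hslope :=
      hf.slope_le_deriv (zero_lt_one' ℝ) (zero_lt_one.trans h1β) h1β (hfd β (by linarith))
    rw [slope_def_field, div_le_iff₀ (by linarith)] at hslope
    have key : a * β < 2 * a - 2 * f 1 := by
      have := mul_lt_mul_of_neg_left hβ ha
      rw [mul_sub, mul_div_cancel₀ _ ha.ne] at this
      linarith
    nlinarith
  · filter_upwards [eventually_gt_atTop 0] with β hβ
    exact (hf.deriv_nonpos_of_tendsto_atBot hβ (hfd β hβ) hbot).trans_lt ha

theorem tendsto_mul_deriv_sub_atTop (hf : ConvexOn ℝ (Ioi 0) f)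
    (hfd : ∀ β > 0, DifferentiableAt ℝ f β) (hbot : Tendsto f atTop atBot)
    (hlin : ∀ ε > 0, ∀ᶠ β in atTop, -(ε * β) ≤ f β) :
    Tendsto (fun β => β * deriv f β - f β) atTop atTop := by
  refine tendsto_atTop.2 fun M => ?_
  obtain ⟨γ, hγ, hγ0⟩ :=
    ((hbot.eventually_le_atBot (-(M + 1))).and (eventually_gt_atTop 0)).exists
  -- the tangent line at `β` lies below `f` at `γ`, and its slope tends to `0`
  filter_upwards [(hf.tendsto_deriv_atTop_zero hfd hbot hlin).eventually
      (eventually_gt_nhds (show -γ⁻¹ < 0 by simpa using hγ0)), eventually_gt_atTop γ]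
    with β hderiv hγβ
  have hslope := hf.slope_le_deriv hγ0 (hγ0.trans hγβ) hγβ (hfd β (hγ0.trans hγβ))
  rw [slope_def_field, div_le_iff₀ (by linarith)] at hslope
  have : -1 < γ * deriv f β := by
    have := mul_lt_mul_of_pos_left hderiv hγ0
    rwa [mul_neg, mul_inv_cancel₀ hγ0.ne'] at this
  nlinarith

end ConvexOn

lemma tendsto_mul_exp_atBot_nhds_zero : Tendsto (fun u : ℝ => u * exp u) atBot (𝓝 0) := by
  have h := ((tendsto_pow_mul_exp_neg_atTop_nhds_zero 1).neg).comp tendsto_neg_atBot_atTop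
  simpa [Function.comp_def] using h

lemma abs_mul_exp_le_one_of_nonpos {u : ℝ} (hu : u ≤ 0) : |u * exp u| ≤ 1 := by
  have h := add_one_le_exp (-u)
  rw [abs_mul, abs_of_nonpos hu, abs_of_pos (exp_pos u)]
  have : exp (-u) * exp u = 1 := by rw [← exp_add]; simp
  nlinarith [exp_pos u]

section Cgf

variable {Ω : Type*} [MeasurableSpace Ω] {μ : Measure Ω} {X : Ω → ℝ}

lemma convexOn_cgf : ConvexOn ℝ (interior (integrableExpSet X μ)) (cgf X μ) := by
  have hconv : Convex ℝ (interior (integrableExpSet X μ)) := convex_integrableExpSet.interior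
  refine convexOn_of_deriv2_nonneg hconv analyticOn_cgf.continuousOn ?_ ?_ ?_ <;>
    rw [interior_interior]
  · exact analyticOn_cgf.differentiableOn
  · intro t ht
    exact (analyticAt_cgf ht).deriv.differentiableAt.differentiableWithinAt
  · intro t ht
    rw [← iteratedDeriv_eq_iterate, iteratedDeriv_two_cgf_eq_integral ht]
    exact div_nonneg (integral_nonneg fun ω => by positivity) mgf_nonneg

lemma cgf_eq_cgf_sub_const_add [NeZero μ] (c : ℝ) {t : ℝ} (ht : t ∈ integrableExpSet X μ) :
    cgf X μ t = cgf (fun ω => X ω - c) μ t + t * c := by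
  have hmgf : mgf X μ t = mgf (fun ω => X ω - c) μ t * exp (t * c) := by
    simpa using (mgf_add_const (X := fun ω => X ω - c) (μ := μ) (t := t) c)
  have hpos : 0 < mgf (fun ω => X ω - c) μ t := by
    refine mgf_pos' (NeZero.ne μ) ?_
    simpa [mul_sub, exp_sub] using ht.div_const (exp (t * c))
  rw [cgf, hmgf, log_mul hpos.ne' (exp_pos _).ne', log_exp, cgf]

lemma mul_deriv_cgf_sub_cgf_sub_const [NeZero μ] (c : ℝ) {β : ℝ}
    (hβ : β ∈ interior (integrableExpSet X μ)) :
    β * deriv (cgf (fun ω => X ω - c) μ) β - cgf (fun ω => X ω - c) μ β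
      = β * deriv (cgf X μ) β - cgf X μ β := by
  have hev : cgf (fun ω => X ω - c) μ =ᶠ[𝓝 β] fun t => cgf X μ t - t * c := by
    filter_upwards [isOpen_interior.mem_nhds hβ] with t ht
    rw [cgf_eq_cgf_sub_const_add c (interior_subset ht)]
    ring
  have hd : HasDerivAt (cgf (fun ω => X ω - c) μ) (deriv (cgf X μ) β - c) β :=
    ((analyticAt_cgf hβ).differentiableAt.hasDerivAt.sub
      (hasDerivAt_mul_const c)).congr_of_eventuallyEq hev
  rw [hd.deriv, hev.eq_of_nhds]
  ring

lemma Ioi_subset_interior_integrableExpSet_of_ae_le [IsFiniteMeasure μ] (hX : AEMeasurable X μ)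
    {c : ℝ} (hXc : ∀ᵐ ω ∂μ, X ω ≤ c) : Ioi 0 ⊆ interior (integrableExpSet X μ) := by
  rw [← interior_Ici]
  refine interior_mono fun t (ht : 0 ≤ t) => ?_
  refine Integrable.of_bound (hX.const_mul t).exp.aestronglyMeasurable (exp (t * c)) ?_
  filter_upwards [hXc] with ω hω
  rw [norm_of_nonneg (exp_pos _).le]
  exact exp_le_exp.2 (mul_le_mul_of_nonneg_left hω ht)

section Nonpos

variable [IsFiniteMeasure μ] {Y : Ω → ℝ}

lemma tendsto_mgf_atTop_of_nonpos (hY : Measurable Y) (hY0 : ∀ᵐ ω ∂μ, Y ω ≤ 0) :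
    Tendsto (mgf Y μ) atTop (𝓝 (μ.real {ω | Y ω = 0})) := by
  have hmeas : MeasurableSet {ω | Y ω = 0} := hY (measurableSet_singleton 0)
  rw [← integral_indicator_one hmeas]
  refine tendsto_integral_filter_of_dominated_convergence (fun _ => 1)
    (Eventually.of_forall fun β => (hY.const_mul β).exp.aestronglyMeasurable) ?_
    (integrable_const 1) ?_
  · filter_upwards [eventually_ge_atTop 0] with β hβ
    filter_upwards [hY0] with ω hω
    rw [norm_of_nonneg (exp_pos _).le, exp_le_one_iff]
    exact mul_nonpos_of_nonneg_of_nonpos hβ hω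
  · filter_upwards [hY0] with ω hω
    rcases hω.eq_or_lt with h | h
    · simp [h]
    · simpa [h.ne] using tendsto_id.atTop_mul_const_of_neg h

lemma tendsto_mul_integral_mul_exp_atTop_of_nonpos (hY : Measurable Y)
    (hY0 : ∀ᵐ ω ∂μ, Y ω ≤ 0) :
    Tendsto (fun β => β * ∫ ω, Y ω * exp (β * Y ω) ∂μ) atTop (𝓝 0) := by
  simp_rw [← integral_const_mul, ← mul_assoc]
  rw [← integral_zero Ω ℝ]
  refine tendsto_integral_filter_of_dominated_convergence (fun _ => 1)
    (Eventually.of_forall fun β =>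
      ((hY.const_mul β).mul (hY.const_mul β).exp).aestronglyMeasurable) ?_
    (integrable_const 1) ?_
  · filter_upwards [eventually_ge_atTop 0] with β hβ
    filter_upwards [hY0] with ω hω
    exact abs_mul_exp_le_one_of_nonpos (mul_nonpos_of_nonneg_of_nonpos hβ hω)
  · filter_upwards [hY0] with ω hω
    rcases hω.eq_or_lt with h | h
    · simp [h]
    · exact tendsto_mul_exp_atBot_nhds_zero.comp (tendsto_id.atTop_mul_const_of_neg h)

theorem tendsto_mul_deriv_cgf_sub_cgf_nhds_of_nonpos (hY : Measurable Y)
    (hY0 : ∀ᵐ ω ∂μ, Y ω ≤ 0) (h0 : 0 < μ {ω | Y ω = 0}) :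
    Tendsto (fun β => β * deriv (cgf Y μ) β - cgf Y μ β) atTop
      (𝓝 (-log (μ.real {ω | Y ω = 0}))) := by
  have hp : 0 < μ.real {ω | Y ω = 0} := ENNReal.toReal_pos h0.ne' (measure_ne_top μ _)
  have hmgf := tendsto_mgf_atTop_of_nonpos hY hY0
  have hlim := ((tendsto_mul_integral_mul_exp_atTop_of_nonpos hY hY0).div hmgf hp.ne').sub
    ((continuousAt_log hp.ne').tendsto.comp hmgf)
  rw [zero_div, zero_sub] at hlim
  refine hlim.congr' ?_
  filter_upwards [eventually_gt_atTop 0] with β hβ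
  rw [deriv_cgf (Ioi_subset_interior_integrableExpSet_of_ae_le hY.aemeasurable hY0 hβ)]
  simp [cgf, mul_div_assoc]

variable [NeZero μ]

lemma tendsto_cgf_atTop_atBot_of_nonpos (hY : Measurable Y) (hY0 : ∀ᵐ ω ∂μ, Y ω ≤ 0)
    (h0 : μ {ω | Y ω = 0} = 0) : Tendsto (cgf Y μ) atTop atBot := by
  have hmgf : Tendsto (mgf Y μ) atTop (𝓝[>] 0) := by
    refine tendsto_nhdsWithin_iff.2
      ⟨by simpa [measureReal_def, h0] using tendsto_mgf_atTop_of_nonpos hY hY0, ?_⟩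
    filter_upwards [eventually_gt_atTop 0] with β hβ
    exact mgf_pos' (NeZero.ne μ) (interior_subset (s := integrableExpSet Y μ)
      (Ioi_subset_interior_integrableExpSet_of_ae_le hY.aemeasurable hY0 hβ))
  exact tendsto_log_nhdsGT_zero.comp hmgf

lemma eventually_neg_mul_le_cgf_of_nonpos (hY : AEMeasurable Y μ)
    (hY0 : ∀ᵐ ω ∂μ, Y ω ≤ 0) (hpos : ∀ a < 0, 0 < μ {ω | a < Y ω}) {ε : ℝ} (hε : 0 < ε) :
    ∀ᶠ β in atTop, -(ε * β) ≤ cgf Y μ β := by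
  set q := μ.real {ω | -(ε / 2) ≤ Y ω}
  have hq : 0 < q := ENNReal.toReal_pos
    ((hpos (-(ε / 2)) (by linarith)).trans_le
      (measure_mono fun ω (hω : -(ε / 2) < Y ω) => hω.le)).ne'
    (measure_ne_top μ _)
  filter_upwards [eventually_ge_atTop (-(2 * log q) / ε), eventually_gt_atTop 0] with β hβ hβ0
  have hint := interior_subset (Ioi_subset_interior_integrableExpSet_of_ae_le hY hY0 hβ0)
  have hchernoff := measure_ge_le_exp_mul_mgf (-(ε / 2)) hβ0.le hint
  have hlog : log q ≤ β * (ε / 2) + cgf Y μ β := by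
    have := log_le_log hq hchernoff
    rwa [log_mul (exp_pos _).ne' (mgf_pos' (NeZero.ne μ) hint).ne', log_exp, neg_mul_neg] at this
  linarith [(div_le_iff₀ hε).1 hβ]

theorem tendsto_mul_deriv_cgf_sub_cgf_atTop_of_nonpos (hY : Measurable Y)
    (hY0 : ∀ᵐ ω ∂μ, Y ω ≤ 0) (hpos : ∀ a < 0, 0 < μ {ω | a < Y ω})
    (h0 : μ {ω | Y ω = 0} = 0) :
    Tendsto (fun β => β * deriv (cgf Y μ) β - cgf Y μ β) atTop atTop := by
  have hsub := Ioi_subset_interior_integrableExpSet_of_ae_le hY.aemeasurable hY0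
  exact (convexOn_cgf.subset hsub (convex_Ioi 0)).tendsto_mul_deriv_sub_atTop
    (fun β hβ => (analyticAt_cgf (hsub hβ)).differentiableAt)
    (tendsto_cgf_atTop_atBot_of_nonpos hY hY0 h0)
    (fun ε hε => eventually_neg_mul_le_cgf_of_nonpos hY.aemeasurable hY0 hpos hε)

end Nonpos

end Cgf

theorem stmt14_general {Ω : Type*} [MeasurableSpace Ω] (μ : Measure Ω) [IsProbabilityMeasure μ]
    (X : Ω → ℝ) (hmeas : Measurable X)
    (s : ℝ) (hle : ∀ᵐ x ∂μ, X x ≤ s) (hs : ∀ s' < s, 0 < μ {x | s' < X x})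
    (lam : ℝ → ℝ) (hlam : lam = fun β => Real.log (∫ y, Real.exp (β * X y) ∂μ)) :
    (μ {x | X x = s} = 0 →
      Tendsto (fun β : ℝ => β * deriv lam β - lam β) atTop atTop) ∧
    (0 < μ {x | X x = s} →
      Tendsto (fun β : ℝ => β * deriv lam β - lam β) atTop
        (nhds (-Real.log (μ {x | X x = s}).toReal))) := by
  have hcgf : lam = cgf X μ := hlam
  set Y := fun x => X x - s
  have hY : Measurable Y := hmeas.sub_const s
  have hY0 : ∀ᵐ x ∂μ, Y x ≤ 0 := by filter_upwards [hle] with x hx using sub_nonpos.2 hx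
  have hpos : ∀ a < 0, 0 < μ {x | a < Y x} := fun a ha => by
    simpa [Y, lt_sub_iff_add_lt'] using hs (s + a) (by linarith)
  have hset : {x | Y x = 0} = {x | X x = s} := by ext x; simp [Y, sub_eq_zero]
  have hshift : (fun β => β * deriv (cgf Y μ) β - cgf Y μ β) =ᶠ[atTop]
      fun β => β * deriv lam β - lam β := by
    filter_upwards [eventually_gt_atTop 0] with β hβ
    rw [hcgf, mul_deriv_cgf_sub_cgf_sub_const s
      (Ioi_subset_interior_integrableExpSet_of_ae_le hmeas.aemeasurable hle hβ)]
  refine ⟨fun h0 => ?_, fun h0 => ?_⟩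
  · rw [← hset] at h0
    exact (tendsto_mul_deriv_cgf_sub_cgf_atTop_of_nonpos hY hY0 hpos h0).congr' hshift
  · rw [← hset] at h0 ⊢
    exact (tendsto_mul_deriv_cgf_sub_cgf_nhds_of_nonpos hY hY0 h0).congr' hshift

theorem stmt14 {Ω : Type*} [MeasurableSpace Ω] (μ : Measure Ω) [IsProbabilityMeasure μ]
    (X : Ω → ℝ) (hmeas : Measurable X)
    (hint : ∀ β > (0:ℝ), Integrable (fun x => Real.exp (β * X x)) μ)
    (s : ℝ) (hle : ∀ᵐ x ∂μ, X x ≤ s) (hs : ∀ s' < s, 0 < μ {x | s' < X x})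
    (lam : ℝ → ℝ) (hlam : lam = fun β => Real.log (∫ y, Real.exp (β * X y) ∂μ)) :
    (μ {x | X x = s} = 0 →
      Tendsto (fun β : ℝ => β * deriv lam β - lam β) atTop atTop) ∧
    (0 < μ {x | X x = s} →
      Tendsto (fun β : ℝ => β * deriv lam β - lam β) atTop
        (nhds (-Real.log (μ {x | X x = s}).toReal))) :=
  stmt14_general μ X hmeas s hle hs lam hlam
end
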